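/- Per-policy variance reduction (RL setting, single-trajectory comparison): for every k, t ∈ {0,…,T−1}, and s ∈ 𝒮, if for all k, t, s: sqrt(η̄_t/η̲_t) (Σ_a π^(k)_t(a|s) sqrt(ĥq_{π^(k),t}(s,a)))² ≤ Σ_a π^(k)_t(a|s) ĥq_{π^(k),t}(s,a), then V(G^PDIS_k(τ^{ĥμ_{t:T−1}}_{t:T−1}) | S_t = s) ≤ V(G^PDIS_k(τ^{π^(k)_{t:T−1}}_{t:T−1}) | S_t = s). -/

import Mathlib

open Finset

section RL

variable {S A : Type*}

/-- Expectation, over the random trajectory of length `h` generated from time `t` and state `s`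
by the behavior policy `μ` in the MDP with transition kernel `p`, of a functional `f` of the
trajectory (recorded as the list of successive (action, next-state) pairs).  This is the finite
sum over all trajectories weighted by their probabilities; trajectories of zero probability
contribute `0`. -/
noncomputable def Etraj [Fintype S] [Fintype A] (p : S → A → S → ℝ)
    (μ : ℕ → S → A → ℝ) : ℕ → ℕ → S → (List (A × S) → ℝ) → ℝ
  | 0, _, _, f => f []
  | h + 1, t, s, f =>
      ∑ a : A, ∑ s' : S,
        μ t s a * p s a s' * Etraj p μ h (t + 1) s' (fun l => f ((a, s') :: l))

/-- Total (undiscounted) reward `Σ_i R_{i+1}` along a trajectory starting from state `s`. -/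
noncomputable def retF (r : S → A → ℝ) : S → List (A × S) → ℝ
  | _, [] => 0
  | s, (a, s') :: l => r s a + retF r s' l

/-- The PDIS return `G^PDIS(τ^{μ_{t:T-1}}_{t:T-1}) = Σ_i (∏_{j=t}^i ρ^{π,μ}_j) R_{i+1}` of a
trajectory starting at time `t` in state `s`, with target policy `π` and behavior policy `μ`,
in its recursive form. -/
noncomputable def pdisF (r : S → A → ℝ) (π μ : ℕ → S → A → ℝ) :
    ℕ → S → List (A × S) → ℝ
  | _, _, [] => 0
  | t, s, (a, s') :: l => π t s a / μ t s a * (r s a + pdisF r π μ (t + 1) s' l)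

/-- State value function `v_{π,t}(s) = E_π[Σ_{i=t+1}^T R_i | S_t = s]` for horizon `T`. -/
noncomputable def vval [Fintype S] [Fintype A] (p : S → A → S → ℝ) (r : S → A → ℝ)
    (π : ℕ → S → A → ℝ) (T t : ℕ) (s : S) : ℝ :=
  Etraj p π (T - t) t s (retF r s)

/-- Action value function `q_{π,t}(s,a) = E_π[Σ_{i=t+1}^T R_i | S_t = s, A_t = a]`. -/
noncomputable def qval [Fintype S] [Fintype A] (p : S → A → S → ℝ) (r : S → A → ℝ)
    (π : ℕ → S → A → ℝ) (T t : ℕ) (s : S) (a : A) : ℝ :=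
  r s a + ∑ s' : S, p s a s' * vval p r π T (t + 1) s'

/-- Conditional expectation `E[G^PDIS(τ^{μ_{t:T-1}}_{t:T-1}) | S_t = s]`. -/
noncomputable def Epdis [Fintype S] [Fintype A] (p : S → A → S → ℝ) (r : S → A → ℝ)
    (π μ : ℕ → S → A → ℝ) (T t : ℕ) (s : S) : ℝ :=
  Etraj p μ (T - t) t s (pdisF r π μ t s)

/-- Conditional variance `V(G^PDIS(τ^{μ_{t:T-1}}_{t:T-1}) | S_t = s)`. -/
noncomputable def Vpdis [Fintype S] [Fintype A] (p : S → A → S → ℝ) (r : S → A → ℝ)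
    (π μ : ℕ → S → A → ℝ) (T t : ℕ) (s : S) : ℝ :=
  Etraj p μ (T - t) t s (fun l => pdisF r π μ t s l ^ 2) - Epdis p r π μ T t s ^ 2

/-- `ν_{π,t}(s,a) = V_{S'~p(·|s,a)}(v_{π,t+1}(S'))` for `t ≤ T-2`, and `ν_{π,T-1}(s,a) = 0`. -/
noncomputable def nuval [Fintype S] [Fintype A] (p : S → A → S → ℝ) (r : S → A → ℝ)
    (π : ℕ → S → A → ℝ) (T t : ℕ) (s : S) (a : A) : ℝ :=
  if t = T - 1 then 0
  else (∑ s' : S, p s a s' * vval p r π T (t + 1) s' ^ 2)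
       - (∑ s' : S, p s a s' * vval p r π T (t + 1) s') ^ 2

/-- The variance-augmented action value `ĥq_{π,t}(s,a)`:
`ĥq_{π,T-1}(s,a) = q_{π,T-1}(s,a)²` and, for `t ≤ T-2`,
`ĥq_{π,t}(s,a) = q_{π,t}(s,a)² + ν_{π,t}(s,a) + Σ_{s'} p(s'|s,a) V(G^PDIS(τ^{π_{t+1:T-1}}) | S_{t+1}=s')`. -/
noncomputable def hq [Fintype S] [Fintype A] (p : S → A → S → ℝ) (r : S → A → ℝ)
    (π : ℕ → S → A → ℝ) (T t : ℕ) (s : S) (a : A) : ℝ :=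
  if t = T - 1 then qval p r π T t s a ^ 2
  else qval p r π T t s a ^ 2 + nuval p r π T t s a
       + ∑ s' : S, p s a s' * Vpdis p r π π T (t + 1) s'

/-- The tailored behavior policy `ĥμ_t(a|s) ∝ sqrt(Σ_k π^(k)_t(a|s)² ĥq_{π^(k),t}(s,a))`,
normalized over `a ∈ 𝒜` (uniform on `𝒜` if all the weights vanish). -/
noncomputable def hmu [Fintype S] [Fintype A] (p : S → A → S → ℝ) (r : S → A → ℝ)
    (K : ℕ) (π : Fin K → ℕ → S → A → ℝ) (T t : ℕ) (s : S) (a : A) : ℝ :=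
  if (∑ b : A, Real.sqrt (∑ k : Fin K, π k t s b ^ 2 * hq p r (π k) T t s b)) = 0 then
    (Fintype.card A : ℝ)⁻¹
  else
    Real.sqrt (∑ k : Fin K, π k t s a ^ 2 * hq p r (π k) T t s a) /
      ∑ b : A, Real.sqrt (∑ k : Fin K, π k t s b ^ 2 * hq p r (π k) T t s b)

/-- `w^(k)_t(s,a) = π^(k)_t(a|s)² ĥq_{π^(k),t}(s,a)`. -/
noncomputable def wRL [Fintype S] [Fintype A] (p : S → A → S → ℝ) (r : S → A → ℝ)
    (K : ℕ) (π : Fin K → ℕ → S → A → ℝ) (T : ℕ) (k : Fin K) (t : ℕ) (s : S) (a : A) : ℝ :=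
  π k t s a ^ 2 * hq p r (π k) T t s a

/-- `η^(k)_t(s,a) = w^(k)_t(s,a) / w̄_t(s,a)` with `w̄_t(s,a) = (1/K) Σ_j w^(j)_t(s,a)`. -/
noncomputable def etaRL [Fintype S] [Fintype A] (p : S → A → S → ℝ) (r : S → A → ℝ)
    (K : ℕ) (π : Fin K → ℕ → S → A → ℝ) (T : ℕ) (k : Fin K) (t : ℕ) (s : S) (a : A) : ℝ :=
  wRL p r K π T k t s a / ((∑ j : Fin K, wRL p r K π T j t s a) / K)

/-- `η̲_t = min_{k,s,a} η^(k)_t(s,a)`. -/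
noncomputable def etaLoRL [Fintype S] [Fintype A] (p : S → A → S → ℝ) (r : S → A → ℝ)
    (K : ℕ) (π : Fin K → ℕ → S → A → ℝ) (T t : ℕ) : ℝ :=
  ⨅ x : Fin K × S × A, etaRL p r K π T x.1 t x.2.1 x.2.2

/-- `η̄_t = max_{k,s,a} η^(k)_t(s,a)`. -/
noncomputable def etaHiRL [Fintype S] [Fintype A] (p : S → A → S → ℝ) (r : S → A → ℝ)
    (K : ℕ) (π : Fin K → ℕ → S → A → ℝ) (T t : ℕ) : ℝ :=
  ⨆ x : Fin K × S × A, etaRL p r K π T x.1 t x.2.1 x.2.2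

end RL

/-! PDIS is unbiased, so both conditional variances have the same mean `v_{π,t}(s)` and it
suffices to compare second moments. The second moment `M_{μ,t}(s)` of the PDIS return satisfies
`M_{μ,t}(s) = Σ_a π_t(a|s)² / μ_t(a|s) · Σ_{s'} p(s'|s,a) (r² + 2 r v_{π,t+1}(s') + M_{μ,t+1}(s'))`,
and for `μ = π` the inner sum is exactly `ĥq_{π,t}(s,a)`. By backward induction on `t` it is
therefore enough that `Σ_a π² ĥq / μ ≤ Σ_a π ĥq` at every step. For `μ = ĥμ` and
`W = Σ_j w^(j)` the left side is `(Σ_a √W) (Σ_a w^(k) / √W)`, and the bounds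
`η̲_t w̄ ≤ w^(k) ≤ η̄_t w̄` make it at most `√(η̄_t / η̲_t) (Σ_a π √ĥq)²`, which the similarity
condition bounds by `Σ_a π ĥq`. -/

theorem sum_sqrt_mul_sum_div_sqrt_le {ι : Type*} (s : Finset ι) {u W : ι → ℝ} {m M : ℝ}
    (hm : 0 < m) (hW : ∀ i ∈ s, 0 < W i) (hlo : ∀ i ∈ s, m * W i ≤ u i)
    (hhi : ∀ i ∈ s, u i ≤ M * W i) :
    (∑ i ∈ s, √(W i)) * ∑ i ∈ s, u i / √(W i) ≤ √(M / m) * (∑ i ∈ s, √(u i)) ^ 2 := by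
  have hu : ∀ i ∈ s, 0 ≤ u i := fun i hi => (mul_pos hm (hW i hi)).le.trans (hlo i hi)
  have hsqrtW : ∀ i ∈ s, √(W i) ≤ √(u i) / √m := fun i hi => by
    rw [← Real.sqrt_div' _ hm.le]
    exact Real.sqrt_le_sqrt ((le_div_iff₀ hm).2 (by linarith [hlo i hi]))
  have hdiv : ∀ i ∈ s, u i / √(W i) ≤ √M * √(u i) := fun i hi => by
    have hWi := hW i hi
    calc u i / √(W i) = √(u i / W i) * √(u i) := by
          rw [Real.sqrt_div' _ hWi.le, div_mul_eq_mul_div, Real.mul_self_sqrt (hu i hi)]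
      _ ≤ √M * √(u i) := by
          gcongr
          rw [div_le_iff₀ hWi]
          exact hhi i hi
  calc (∑ i ∈ s, √(W i)) * ∑ i ∈ s, u i / √(W i)
      ≤ (∑ i ∈ s, √(u i) / √m) * ∑ i ∈ s, √M * √(u i) := by
        gcongr with i hi i hi
        · exact Finset.sum_nonneg fun i hi => div_nonneg (hu i hi) (Real.sqrt_nonneg _)
        · exact hsqrtW i hi
        · exact hdiv i hi
    _ = √(M / m) * (∑ i ∈ s, √(u i)) ^ 2 := by
        rw [← Finset.sum_div, ← Finset.mul_sum, Real.sqrt_div' _ hm.le]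
        ring

section Trajectory

variable {S A : Type*} [Fintype S] [Fintype A] {p : S → A → S → ℝ} {μ : ℕ → S → A → ℝ}

theorem Etraj_add (n t : ℕ) (s : S) (f g : List (A × S) → ℝ) :
    Etraj p μ n t s (fun l => f l + g l) = Etraj p μ n t s f + Etraj p μ n t s g := by
  induction n generalizing t s f g with
  | zero => rfl
  | succ n ih => simp only [Etraj, ih, mul_add, Finset.sum_add_distrib]

theorem Etraj_const_mul (n t : ℕ) (s : S) (c : ℝ) (f : List (A × S) → ℝ) :
    Etraj p μ n t s (fun l => c * f l) = c * Etraj p μ n t s f := by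
  induction n generalizing t s f with
  | zero => rfl
  | succ n ih => simp only [Etraj, ih, Finset.mul_sum, mul_left_comm c]

theorem Etraj_const {T : ℕ} (hp : ∀ s a, ∑ s', p s a s' = 1)
    (hμ : ∀ t < T, ∀ s, ∑ a, μ t s a = 1) (n t : ℕ) (s : S) (c : ℝ) (htn : t + n ≤ T) :
    Etraj p μ n t s (fun _ => c) = c := by
  induction n generalizing t s with
  | zero => rfl
  | succ n ih =>
    simp only [Etraj, ih (t + 1) _ (by omega), mul_assoc, ← Finset.mul_sum, ← Finset.sum_mul,
      hp, one_mul, hμ t (by omega) s]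

end Trajectory

section PDIS

variable {S A : Type*} [Fintype S] [Fintype A] {p : S → A → S → ℝ} (r : S → A → ℝ)
  {π μ : ℕ → S → A → ℝ} {T : ℕ}

theorem Etraj_pdisF_eq_Etraj_retF (hp : ∀ s a, ∑ s', p s a s' = 1)
    (hπ : ∀ t < T, ∀ s, ∑ a, π t s a = 1) (hμ : ∀ t < T, ∀ s, ∑ a, μ t s a = 1)
    (hsupp : ∀ t < T, ∀ s a, μ t s a = 0 → π t s a = 0) (n t : ℕ) (s : S) (htn : t + n ≤ T) :
    Etraj p μ n t s (pdisF r π μ t s) = Etraj p π n t s (retF r s) := by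
  induction n generalizing t s with
  | zero => rfl
  | succ n ih =>
    simp only [Etraj, pdisF, retF, Etraj_const_mul, Etraj_add,
      Etraj_const hp hμ n (t + 1) _ _ (by omega), Etraj_const hp hπ n (t + 1) _ _ (by omega),
      ih (t + 1) _ (by omega)]
    refine Finset.sum_congr rfl fun a _ => Finset.sum_congr rfl fun s' _ => ?_
    linear_combination (p s a s' * (r s a + Etraj p π n (t + 1) s' (retF r s'))) *
      mul_div_cancel_of_imp' (hsupp t (by omega) s a)

theorem Etraj_pdisF_sq_succ (hp : ∀ s a, ∑ s', p s a s' = 1)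
    (hπ : ∀ t < T, ∀ s, ∑ a, π t s a = 1) (hμ : ∀ t < T, ∀ s, ∑ a, μ t s a = 1)
    (hsupp : ∀ t < T, ∀ s a, μ t s a = 0 → π t s a = 0) (n t : ℕ) (s : S)
    (htn : t + (n + 1) ≤ T) :
    Etraj p μ (n + 1) t s (fun l => pdisF r π μ t s l ^ 2) =
      ∑ a, π t s a ^ 2 / μ t s a * ∑ s', p s a s' *
        (r s a ^ 2 + 2 * r s a * Etraj p π n (t + 1) s' (retF r s') +
          Etraj p μ n (t + 1) s' (fun l => pdisF r π μ (t + 1) s' l ^ 2)) := by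
  have hsq : ∀ (c b : ℝ) (F : List (A × S) → ℝ),
      (fun l => (c * (b + F l)) ^ 2) = fun l => c ^ 2 * (b ^ 2 + (2 * b * F l + F l ^ 2)) :=
    fun c b F => funext fun l => by ring
  simp only [Etraj, pdisF, hsq, Etraj_const_mul, Etraj_add,
    Etraj_const hp hμ n (t + 1) _ _ (by omega),
    Etraj_pdisF_eq_Etraj_retF r hp hπ hμ hsupp n (t + 1) _ (by omega), Finset.mul_sum]
  refine Finset.sum_congr rfl fun a _ => Finset.sum_congr rfl fun s' _ => ?_
  rcases eq_or_ne (μ t s a) 0 with h | h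
  · simp [h]
  · field_simp
    ring

theorem hq_eq_sum_moment (hp : ∀ s a, ∑ s', p s a s' = 1)
    (hπ : ∀ t < T, ∀ s, ∑ a, π t s a = 1)
    (n t : ℕ) (htn : t + 1 + n = T) (s : S) (a : A) :
    hq p r π T t s a = ∑ s', p s a s' *
      (r s a ^ 2 + 2 * r s a * Etraj p π n (t + 1) s' (retF r s') +
        Etraj p π n (t + 1) s' (fun l => pdisF r π π (t + 1) s' l ^ 2)) := by
  subst htn
  have hn : t + 1 + n - (t + 1) = n := by omega
  rcases Nat.eq_zero_or_pos n with rfl | hpos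
  · simp [hq, qval, vval, Etraj, retF, pdisF, ← Finset.sum_mul, hp]
  · have hE : ∀ s', Epdis p r π π (t + 1 + n) (t + 1) s' = vval p r π (t + 1 + n) (t + 1) s' :=
      fun s' => by
        rw [Epdis, vval, hn]
        exact Etraj_pdisF_eq_Etraj_retF r hp hπ hπ (fun _ _ _ _ h => h) n (t + 1) s' le_rfl
    have ht : t ≠ t + 1 + n - 1 := by omega
    simp only [hq, nuval, qval, if_neg ht, Vpdis, hE, vval, hn]
    simp only [mul_add, mul_sub, Finset.sum_add_distrib, Finset.sum_sub_distrib, ← Finset.sum_mul,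
      hp, mul_left_comm _ (2 * r s a), ← Finset.mul_sum]
    ring

theorem Etraj_pdisF_sq_le_on_policy (hp0 : ∀ s a s', 0 ≤ p s a s')
    (hp : ∀ s a, ∑ s', p s a s' = 1) (hπ : ∀ t < T, ∀ s, ∑ a, π t s a = 1)
    (hμ0 : ∀ t < T, ∀ s a, 0 < μ t s a) (hμ : ∀ t < T, ∀ s, ∑ a, μ t s a = 1)
    (hstep : ∀ t < T, ∀ s, ∑ a, π t s a ^ 2 * hq p r π T t s a / μ t s a ≤
      ∑ a, π t s a * hq p r π T t s a)
    (n t : ℕ) (s : S) (htn : t + n = T) :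
    Etraj p μ n t s (fun l => pdisF r π μ t s l ^ 2) ≤
      Etraj p π n t s (fun l => pdisF r π π t s l ^ 2) := by
  induction n generalizing t s with
  | zero => rfl
  | succ n ih =>
    have ht : t < T := by omega
    rw [Etraj_pdisF_sq_succ r hp hπ hμ (fun t ht s a h => absurd h (hμ0 t ht s a).ne') n t s
        htn.le, Etraj_pdisF_sq_succ r hp hπ hπ (fun _ _ _ _ h => h) n t s htn.le]
    calc _ ≤ ∑ a, π t s a ^ 2 / μ t s a * ∑ s', p s a s' *
          (r s a ^ 2 + 2 * r s a * Etraj p π n (t + 1) s' (retF r s') +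
            Etraj p π n (t + 1) s' (fun l => pdisF r π π (t + 1) s' l ^ 2)) := by
          gcongr with a _ s' _
          · exact div_nonneg (sq_nonneg _) (hμ0 t ht s a).le
          · exact hp0 s a s'
          · exact ih (t + 1) s' (by omega)
      _ = ∑ a, π t s a ^ 2 * hq p r π T t s a / μ t s a := by
          simp only [hq_eq_sum_moment r hp hπ n t (by omega), div_mul_eq_mul_div]
      _ ≤ ∑ a, π t s a * hq p r π T t s a := hstep t ht s
      _ = _ := by simp only [hq_eq_sum_moment r hp hπ n t (by omega), pow_two, mul_self_div_self]

theorem Vpdis_le_on_policy (hp0 : ∀ s a s', 0 ≤ p s a s')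
    (hp : ∀ s a, ∑ s', p s a s' = 1) (hπ : ∀ t < T, ∀ s, ∑ a, π t s a = 1)
    (hμ0 : ∀ t < T, ∀ s a, 0 < μ t s a) (hμ : ∀ t < T, ∀ s, ∑ a, μ t s a = 1)
    (hstep : ∀ t < T, ∀ s, ∑ a, π t s a ^ 2 * hq p r π T t s a / μ t s a ≤
      ∑ a, π t s a * hq p r π T t s a)
    (t : ℕ) (ht : t ≤ T) (s : S) :
    Vpdis p r π μ T t s ≤ Vpdis p r π π T t s := by
  have hmean : Epdis p r π μ T t s = Epdis p r π π T t s := by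
    rw [Epdis, Epdis,
      Etraj_pdisF_eq_Etraj_retF r hp hπ hμ (fun t ht s a h => absurd h (hμ0 t ht s a).ne') _ t s
        (by omega),
      Etraj_pdisF_eq_Etraj_retF r hp hπ hπ (fun _ _ _ _ h => h) _ t s (by omega)]
  rw [Vpdis, Vpdis, hmean]
  gcongr
  exact Etraj_pdisF_sq_le_on_policy r hp0 hp hπ hμ0 hμ hstep _ t s (by omega)

end PDIS

section Tailored

variable {S A : Type*} [Fintype S] [Fintype A] {p : S → A → S → ℝ} {r : S → A → ℝ} {K : ℕ}
  {π : Fin K → ℕ → S → A → ℝ} {T t : ℕ}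

theorem etaLoRL_le_etaRL (k : Fin K) (s : S) (a : A) :
    etaLoRL p r K π T t ≤ etaRL p r K π T k t s a :=
  ciInf_le (Set.finite_range _).bddBelow (k, s, a)

theorem etaRL_le_etaHiRL (k : Fin K) (s : S) (a : A) :
    etaRL p r K π T k t s a ≤ etaHiRL p r K π T t :=
  le_ciSup (f := fun x : Fin K × S × A => etaRL p r K π T x.1 t x.2.1 x.2.2)
    (Set.finite_range _).bddAbove (k, s, a)

theorem hmu_sum_eq_one [Nonempty A] (s : S) : ∑ a, hmu p r K π T t s a = 1 := by
  unfold hmu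
  split_ifs with h
  · simp
  · rw [← Finset.sum_div, div_self h]

theorem hmu_eq_of_pos {s : S} (hW : ∀ a, 0 < ∑ j, wRL p r K π T j t s a) (a : A) :
    hmu p r K π T t s a = √(∑ j, wRL p r K π T j t s a) / ∑ b, √(∑ j, wRL p r K π T j t s b) := by
  have hZ : 0 < ∑ b, √(∑ j, wRL p r K π T j t s b) :=
    (Real.sqrt_pos.2 (hW a)).trans_le
      (Finset.single_le_sum (f := fun b => √(∑ j, wRL p r K π T j t s b))
        (fun b _ => Real.sqrt_nonneg _) (Finset.mem_univ a))
  unfold hmu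
  exact if_neg hZ.ne'

theorem hmu_pos {s : S} (hW : ∀ a, 0 < ∑ j, wRL p r K π T j t s a) (a : A) :
    0 < hmu p r K π T t s a := by
  rw [hmu_eq_of_pos hW]
  exact div_pos (Real.sqrt_pos.2 (hW a))
    (Finset.sum_pos (fun b _ => Real.sqrt_pos.2 (hW b)) ⟨a, Finset.mem_univ a⟩)

theorem sum_sq_mul_hq_div_hmu_le (hK : 0 < K) {k : Fin K} {s : S}
    (hW : ∀ a, 0 < ∑ j, wRL p r K π T j t s a) (hlo : 0 < etaLoRL p r K π T t)
    (hπ0 : ∀ a, 0 ≤ π k t s a)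
    (hcond : √(etaHiRL p r K π T t / etaLoRL p r K π T t) *
        (∑ a, π k t s a * √(hq p r (π k) T t s a)) ^ 2 ≤ ∑ a, π k t s a * hq p r (π k) T t s a) :
    ∑ a, π k t s a ^ 2 * hq p r (π k) T t s a / hmu p r K π T t s a ≤
      ∑ a, π k t s a * hq p r (π k) T t s a := by
  have hKR : (0 : ℝ) < K := by exact_mod_cast hK
  set W : A → ℝ := fun a => ∑ j, wRL p r K π T j t s a
  set u : A → ℝ := fun a => wRL p r K π T k t s a
  have hWK : ∀ a, 0 < W a / K := fun a => div_pos (hW a) hKR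
  have hlo' : ∀ a ∈ Finset.univ, etaLoRL p r K π T t / K * W a ≤ u a := fun a _ => by
    have := (le_div_iff₀ (hWK a)).1 (etaLoRL_le_etaRL k s a)
    calc _ = etaLoRL p r K π T t * (W a / K) := by ring
      _ ≤ u a := this
  have hhi' : ∀ a ∈ Finset.univ, u a ≤ etaHiRL p r K π T t / K * W a := fun a _ => by
    have := (div_le_iff₀ (hWK a)).1 (etaRL_le_etaHiRL k s a)
    calc u a ≤ etaHiRL p r K π T t * (W a / K) := this
      _ = _ := by ring
  calc ∑ a, π k t s a ^ 2 * hq p r (π k) T t s a / hmu p r K π T t s a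
      = (∑ a, √(W a)) * ∑ a, u a / √(W a) := by
        rw [Finset.mul_sum]
        refine Finset.sum_congr rfl fun a _ => ?_
        simp only [hmu_eq_of_pos hW, W, u, wRL, div_div_eq_mul_div]
        ring
    _ ≤ √(etaHiRL p r K π T t / K / (etaLoRL p r K π T t / K)) * (∑ a, √(u a)) ^ 2 :=
        sum_sqrt_mul_sum_div_sqrt_le _ (div_pos hlo hKR) (fun a _ => hW a) hlo' hhi'
    _ = √(etaHiRL p r K π T t / etaLoRL p r K π T t) *
          (∑ a, π k t s a * √(hq p r (π k) T t s a)) ^ 2 := by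
        rw [div_div_div_cancel_right₀ hKR.ne']
        congr 2
        refine Finset.sum_congr rfl fun a _ => ?_
        rw [show u a = π k t s a ^ 2 * hq p r (π k) T t s a from rfl,
          Real.sqrt_mul (sq_nonneg _), Real.sqrt_sq (hπ0 a)]
    _ ≤ _ := hcond

end Tailored

theorem stmt14_general {S A : Type*} [Fintype S] [Fintype A] [Nonempty A]
    (p : S → A → S → ℝ) (r : S → A → ℝ)
    (hp0 : ∀ s a s', 0 ≤ p s a s') (hp1 : ∀ s a, ∑ s' : S, p s a s' = 1)
    (T : ℕ)
    (K : ℕ) (hK : 0 < K) (π : Fin K → ℕ → S → A → ℝ)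
    (hπ : ∀ k t s, t < T → (∀ a, 0 ≤ π k t s a) ∧ (∑ a : A, π k t s a = 1))
    (hwbar : ∀ t, t < T → ∀ (s : S) (a : A),
      0 < (∑ j : Fin K, wRL p r K π T j t s a) / K)
    (hlo : ∀ t, t < T → 0 < etaLoRL p r K π T t)
    (hcond : ∀ (k : Fin K) (t : ℕ), t < T → ∀ s : S,
      Real.sqrt (etaHiRL p r K π T t / etaLoRL p r K π T t) *
          (∑ a : A, π k t s a * Real.sqrt (hq p r (π k) T t s a)) ^ 2
        ≤ ∑ a : A, π k t s a * hq p r (π k) T t s a) :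
    ∀ (k : Fin K) (t : ℕ), t < T → ∀ s : S,
      Vpdis p r (π k) (hmu p r K π T) T t s ≤ Vpdis p r (π k) (π k) T t s := by
  intro k t ht s
  have hW : ∀ t < T, ∀ s a, 0 < ∑ j, wRL p r K π T j t s a := fun t ht s a =>
    (div_pos_iff_of_pos_right (Nat.cast_pos.2 hK)).1 (hwbar t ht s a)
  exact Vpdis_le_on_policy r hp0 hp1 (fun t ht s => (hπ k t s ht).2)
    (fun t ht s => hmu_pos (hW t ht s)) (fun t _ s => hmu_sum_eq_one s)
    (fun t ht s => sum_sq_mul_hq_div_hmu_le hK (hW t ht s) (hlo t ht) (hπ k t s ht).1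
      (hcond k t ht s)) t ht.le s

/-- per-policy variance reduction (RL setting, single-trajectory comparison):
under the similarity condition, for every `k`, `t ∈ {0,…,T-1}` and state `s`,
`V(G^PDIS_k(τ^{ĥμ_{t:T-1}}) | S_t = s) ≤ V(G^PDIS_k(τ^{π^(k)_{t:T-1}}) | S_t = s)`. -/
theorem stmt14 {S A : Type*} [Fintype S] [Fintype A] [Nonempty S] [Nonempty A]
    (p : S → A → S → ℝ) (r : S → A → ℝ)
    (hp0 : ∀ s a s', 0 ≤ p s a s') (hp1 : ∀ s a, ∑ s' : S, p s a s' = 1)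
    (T : ℕ) (hT : 1 ≤ T)
    (K : ℕ) (hK : 0 < K) (π : Fin K → ℕ → S → A → ℝ)
    (hπ : ∀ k t s, t < T → (∀ a, 0 ≤ π k t s a) ∧ (∑ a : A, π k t s a = 1))
    (hwbar : ∀ t, t < T → ∀ (s : S) (a : A),
      0 < (∑ j : Fin K, wRL p r K π T j t s a) / K)
    (hlo : ∀ t, t < T → 0 < etaLoRL p r K π T t)
    (hcond : ∀ (k : Fin K) (t : ℕ), t < T → ∀ s : S,
      Real.sqrt (etaHiRL p r K π T t / etaLoRL p r K π T t) *
          (∑ a : A, π k t s a * Real.sqrt (hq p r (π k) T t s a)) ^ 2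
        ≤ ∑ a : A, π k t s a * hq p r (π k) T t s a) :
    ∀ (k : Fin K) (t : ℕ), t < T → ∀ s : S,
      Vpdis p r (π k) (hmu p r K π T) T t s ≤ Vpdis p r (π k) (π k) T t s :=
  stmt14_general p r hp0 hp1 T K hK π hπ hwbar hlo hcond
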